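/- For an MDP A and convex closed set of distributions H, the set H_win of distributions Δ ∈ H admitting an H-safe strategy is convex. -/

import Mathlib

open scoped BigOperators

/-- An `n × n` real matrix is row-stochastic if all entries are nonnegative
and each row sums to `1`. -/
def RowStochastic {n : ℕ} (M : Matrix (Fin n) (Fin n) ℝ) : Prop :=
  (∀ i j, 0 ≤ M i j) ∧ ∀ i, ∑ j, M i j = 1

/-- A probability distribution on `n` states. -/
def IsDist {n : ℕ} (Δ : Fin n → ℝ) : Prop :=
  (∀ i, 0 ≤ Δ i) ∧ ∑ i, Δ i = 1

/-- A one-step MDP strategy: each state gets a probability distribution over actions. -/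
def IsMDPStrategy {n : ℕ} {A : Type} [Fintype A] (τ : A → Fin n → ℝ) : Prop :=
  (∀ α i, 0 ≤ τ α i) ∧ ∀ i, ∑ α, τ α i = 1

/-- The stochastic matrix induced by a one-step MDP strategy. -/
noncomputable def stratMatrix {n : ℕ} {A : Type} [Fintype A]
    (M : A → Matrix (Fin n) (Fin n) ℝ) (τ : A → Fin n → ℝ) :
    Matrix (Fin n) (Fin n) ℝ :=
  fun i j => ∑ α, τ α i * M α i j

/-- The distribution reached after `m` steps applying the sequence of one-step
strategies `σ` from `Δ`. -/
noncomputable def iterDist {n : ℕ} {A : Type} [Fintype A]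
    (M : A → Matrix (Fin n) (Fin n) ℝ) (σ : ℕ → A → Fin n → ℝ)
    (Δ : Fin n → ℝ) : ℕ → Fin n → ℝ
  | 0 => Δ
  | m + 1 => Matrix.vecMul (iterDist M σ Δ m) (stratMatrix M (σ m))

/-- `Δ` admits an `H`-safe strategy. -/
def HSafe {n : ℕ} {A : Type} [Fintype A]
    (M : A → Matrix (Fin n) (Fin n) ℝ) (H : Set (Fin n → ℝ)) (Δ : Fin n → ℝ) : Prop :=
  ∃ σ : ℕ → A → Fin n → ℝ,
    (∀ m, IsMDPStrategy (σ m)) ∧ ∀ m, iterDist M σ Δ m ∈ H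

/-- The winning region: distributions of `H` admitting an `H`-safe strategy. -/
def Hwin {n : ℕ} {A : Type} [Fintype A]
    (M : A → Matrix (Fin n) (Fin n) ℝ) (H : Set (Fin n → ℝ)) : Set (Fin n → ℝ) :=
  {Δ | Δ ∈ H ∧ HSafe M H Δ}

/-- A convex polytope in H-representation: a finite intersection of half-spaces. -/
def IsPolytope {n : ℕ} (H : Set (Fin n → ℝ)) : Prop :=
  ∃ (k : ℕ) (a : Fin k → Fin n → ℝ) (b : Fin k → ℝ),
    H = {x | ∀ j, ∑ i, a j i * x i ≤ b j}

/-- A one-step PFA strategy: a probability distribution over actions. -/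
def IsPFAStrategy {A : Type} [Fintype A] (τ : A → ℝ) : Prop :=
  (∀ α, 0 ≤ τ α) ∧ ∑ α, τ α = 1

/-- The stochastic matrix induced by a one-step PFA strategy. -/
noncomputable def pfaMatrix {n : ℕ} {A : Type} [Fintype A]
    (M : A → Matrix (Fin n) (Fin n) ℝ) (τ : A → ℝ) : Matrix (Fin n) (Fin n) ℝ :=
  ∑ α, τ α • M α

/-!
Given safe strategies from `x` and from `y`, mix them state by state, weighting them at step `m`
by the mass `a • x` resp. `b • y` has put on the state after `m` steps of its own run. The run of the
mixed strategy from `a • x + b • y` is then, at every step, the same convex combination of the two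
original runs, so it stays in `H` by convexity.
-/

section Mixing

variable {n : ℕ} {A : Type}

/-- Where both weights vanish the state is never reached, and `τ₁` is an arbitrary choice. -/
noncomputable def mixStrategy (p q : Fin n → ℝ) (τ₁ τ₂ : A → Fin n → ℝ) : A → Fin n → ℝ :=
  fun α i => if p i + q i = 0 then τ₁ α i else (p i * τ₁ α i + q i * τ₂ α i) / (p i + q i)

lemma mul_mixStrategy {p q : Fin n → ℝ} (hp : 0 ≤ p) (hq : 0 ≤ q) (τ₁ τ₂ : A → Fin n → ℝ)
    (α : A) (i : Fin n) :
    (p i + q i) * mixStrategy p q τ₁ τ₂ α i = p i * τ₁ α i + q i * τ₂ α i := by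
  by_cases h : p i + q i = 0
  · have hpi : 0 ≤ p i := hp i
    have hqi : 0 ≤ q i := hq i
    simp [show p i = 0 by linarith, show q i = 0 by linarith]
  · simp only [mixStrategy, if_neg h]
    field_simp

variable [Fintype A]

lemma IsMDPStrategy.mixStrategy {p q : Fin n → ℝ} (hp : 0 ≤ p) (hq : 0 ≤ q)
    {τ₁ τ₂ : A → Fin n → ℝ} (h₁ : IsMDPStrategy τ₁) (h₂ : IsMDPStrategy τ₂) :
    IsMDPStrategy (mixStrategy p q τ₁ τ₂) := by
  constructor
  · intro α i
    by_cases h : p i + q i = 0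
    · simpa [_root_.mixStrategy, h] using h₁.1 α i
    · simp only [_root_.mixStrategy, if_neg h]
      exact div_nonneg (add_nonneg (mul_nonneg (hp i) (h₁.1 α i)) (mul_nonneg (hq i) (h₂.1 α i)))
        (add_nonneg (hp i) (hq i))
  · intro i
    by_cases h : p i + q i = 0
    · simpa [_root_.mixStrategy, h] using h₁.2 i
    · simp only [_root_.mixStrategy, if_neg h]
      rw [← Finset.sum_div, div_eq_one_iff_eq h, Finset.sum_add_distrib, ← Finset.mul_sum,
        ← Finset.mul_sum, h₁.2 i, h₂.2 i, mul_one, mul_one]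

lemma vecMul_stratMatrix_mixStrategy (M : A → Matrix (Fin n) (Fin n) ℝ) {p q : Fin n → ℝ}
    (hp : 0 ≤ p) (hq : 0 ≤ q) (τ₁ τ₂ : A → Fin n → ℝ) :
    Matrix.vecMul (p + q) (stratMatrix M (mixStrategy p q τ₁ τ₂)) =
      Matrix.vecMul p (stratMatrix M τ₁) + Matrix.vecMul q (stratMatrix M τ₂) := by
  funext j
  simp only [Matrix.vecMul, dotProduct, Pi.add_apply, ← Finset.sum_add_distrib, stratMatrix,
    Finset.mul_sum]
  refine Finset.sum_congr rfl fun i _ => ?_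
  refine Finset.sum_congr rfl fun α _ => ?_
  linear_combination M α i j * mul_mixStrategy hp hq τ₁ τ₂ α i

lemma iterDist_mixStrategy (M : A → Matrix (Fin n) (Fin n) ℝ) (σ₁ σ₂ : ℕ → A → Fin n → ℝ)
    (x y : Fin n → ℝ) (a b : ℝ)
    (h₁ : ∀ m, 0 ≤ a • iterDist M σ₁ x m) (h₂ : ∀ m, 0 ≤ b • iterDist M σ₂ y m) (m : ℕ) :
    iterDist M
        (fun k => mixStrategy (a • iterDist M σ₁ x k) (b • iterDist M σ₂ y k) (σ₁ k) (σ₂ k))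
        (a • x + b • y) m =
      a • iterDist M σ₁ x m + b • iterDist M σ₂ y m := by
  induction m with
  | zero => rfl
  | succ m ih =>
    rw [iterDist, ih, vecMul_stratMatrix_mixStrategy M (h₁ m) (h₂ m), Matrix.smul_vecMul,
      Matrix.smul_vecMul]
    rfl

end Mixing

lemma convex_setOf_hSafe {n : ℕ} {A : Type} [Fintype A] (M : A → Matrix (Fin n) (Fin n) ℝ)
    {H : Set (Fin n → ℝ)} (hconv : Convex ℝ H) (hnonneg : ∀ Δ ∈ H, 0 ≤ Δ) :
    Convex ℝ {Δ | HSafe M H Δ} := by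
  rintro x ⟨σ₁, hσ₁, hx⟩ y ⟨σ₂, hσ₂, hy⟩ a b ha hb hab
  have h₁ m : 0 ≤ a • iterDist M σ₁ x m := smul_nonneg ha (hnonneg _ (hx m))
  have h₂ m : 0 ≤ b • iterDist M σ₂ y m := smul_nonneg hb (hnonneg _ (hy m))
  refine ⟨_, fun m => (hσ₁ m).mixStrategy (h₁ m) (h₂ m) (hσ₂ m), fun m => ?_⟩
  rw [iterDist_mixStrategy M σ₁ σ₂ x y a b h₁ h₂ m]
  exact hconv (hx m) (hy m) ha hb hab

theorem stmt7_general {n : ℕ} {A : Type} [Fintype A]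
    (M : A → Matrix (Fin n) (Fin n) ℝ)
    (H : Set (Fin n → ℝ)) (hconv : Convex ℝ H)
    (hHd : ∀ Δ ∈ H, IsDist Δ) :
    Convex ℝ (Hwin M H) :=
  hconv.inter (convex_setOf_hSafe M hconv fun Δ hΔ => (hHd Δ hΔ).1)

theorem stmt7 {n : ℕ} {A : Type} [Fintype A]
    (M : A → Matrix (Fin n) (Fin n) ℝ) (hM : ∀ α, RowStochastic (M α))
    (H : Set (Fin n → ℝ)) (hclosed : IsClosed H) (hconv : Convex ℝ H)
    (hHd : ∀ Δ ∈ H, IsDist Δ) :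
    Convex ℝ (Hwin M H) :=
  stmt7_general M H hconv hHd
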